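/- Let φ: R → S be a ring homomorphism, L a finitely presented R-module, and M an S-module. Then sK_S(Hom_R(L,M)) = (φ*)^{-1}(Supp_R(L)) ∩ sK_S(M), where Hom_R(L,M) is an S-module via the S-action on M. -/

import Mathlib

/-!
Write `Ann z` for the annihilator in `S` of an element `z`. An `S`-multiple of `f : L → M` vanishes
iff it vanishes on generators `xᵢ` of `L`, so `Ann f = ⋂ᵢ Ann (f xᵢ)`, and a prime containing this
finite intersection contains one of the `Ann (f xᵢ)`. Moreover `φ (Ann_R L) ⊆ Ann f`, which gives
the support condition.

Conversely, if `p = φ⁻¹ Q` is in the support, then `κ(p) ⊗ L ≠ 0` yields a nonzero map `L → κ(p)`;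
as `L` is finitely presented, clearing denominators gives a nonzero `λ : L → R/p`, which moreover
factors through `R/I` for a finitely generated `I ⊆ p`. For finitely generated `J ⊆ Q`, choose `z`
for the finitely generated ideal `J + I S`; then `f = (r ↦ r z) ∘ λ` is killed by `J`, and `s f = 0`
forces `s φ(c) z = 0` for some `c ∉ p`, hence `s ∈ Q`.
-/

open TensorProduct

/-- `p` is a strong Krull prime of the `R`-module `M`. -/
def IsStrongKrullPrime (R : Type*) [CommRing R] (M : Type*) [AddCommGroup M] [Module R M]
    (p : Ideal R) : Prop :=
  p.IsPrime ∧ ∀ I : Ideal R, I.FG → I ≤ p →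
    ∃ z : M, I ≤ LinearMap.ker (LinearMap.toSpanSingleton R M z) ∧
      LinearMap.ker (LinearMap.toSpanSingleton R M z) ≤ p

section LinearMapsToQuotients

variable {R : Type*} [CommRing R] {L : Type*} [AddCommGroup L] [Module R L]

open scoped nonZeroDivisors in
theorem Ideal.algebraMapSubmonoid_primeCompl_quotient (p : Ideal R) [p.IsPrime] :
    Algebra.algebraMapSubmonoid (R ⧸ p) p.primeCompl = (R ⧸ p)⁰ := by
  ext x
  obtain ⟨x, rfl⟩ := Ideal.Quotient.mk_surjective x
  rw [mem_nonZeroDivisors_iff_ne_zero, ne_eq, Ideal.Quotient.eq_zero_iff_mem]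
  constructor
  · rintro ⟨y, hy, hyx⟩
    rwa [← Ideal.Quotient.eq_zero_iff_mem, ← hyx, Ideal.Quotient.algebraMap_eq,
      Ideal.Quotient.eq_zero_iff_mem]
  · exact fun hx ↦ ⟨x, hx, rfl⟩

instance Ideal.isLocalizedModule_quotient_residueField (p : Ideal R) [p.IsPrime] :
    IsLocalizedModule p.primeCompl
      (IsScalarTower.toAlgHom R (R ⧸ p) p.ResidueField).toLinearMap := by
  rw [isLocalizedModule_iff_isLocalization, p.algebraMapSubmonoid_primeCompl_quotient]
  infer_instance

theorem Module.exists_linearMap_residueField_ne_zero_of_mem_support [Module.Finite R L]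
    {p : PrimeSpectrum R} (hp : p ∈ Module.support R L) :
    ∃ g : L →ₗ[R] p.asIdeal.ResidueField, g ≠ 0 := by
  rw [Module.mem_support_iff_nontrivial_residueField_tensorProduct] at hp
  obtain ⟨v, hv⟩ := exists_ne (0 : p.asIdeal.ResidueField ⊗[R] L)
  obtain ⟨φ, hφ⟩ :=
    not_forall.mp (mt (Module.forall_dual_apply_eq_zero_iff p.asIdeal.ResidueField v).mp hv)
  refine ⟨AlgebraTensorModule.curry (A := p.asIdeal.ResidueField) φ 1, fun h ↦ hφ ?_⟩
  have : φ = 0 := AlgebraTensorModule.curry_injective (LinearMap.ext_ring (by rw [h]; rfl))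
  simp [this]

theorem Module.exists_linearMap_quotient_ne_zero_of_mem_support [Module.FinitePresentation R L]
    {p : PrimeSpectrum R} (hp : p ∈ Module.support R L) :
    ∃ l : L →ₗ[R] R ⧸ p.asIdeal, l ≠ 0 := by
  obtain ⟨g, hg⟩ := exists_linearMap_residueField_ne_zero_of_mem_support hp
  obtain ⟨l, s, hl⟩ := FinitePresentation.exists_lift_of_isLocalizedModule p.asIdeal.primeCompl
    (IsScalarTower.toAlgHom R (R ⧸ p.asIdeal) p.asIdeal.ResidueField).toLinearMap g
  refine ⟨l, fun hl0 ↦ hg (LinearMap.ext fun x ↦ ?_)⟩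
  have hsg : (s : R) • g x = 0 := by
    simpa [hl0, Submonoid.smul_def] using (LinearMap.congr_fun hl x).symm
  rw [Algebra.smul_def, mul_eq_zero, Ideal.algebraMap_residueField_eq_zero] at hsg
  exact hsg.resolve_left s.2

theorem Module.FinitePresentation.exists_fg_lift_quotient [Module.FinitePresentation R L]
    {p : Ideal R} (l : L →ₗ[R] R ⧸ p) :
    ∃ (I : Ideal R) (hIp : I ≤ p), I.FG ∧ ∃ μ : L →ₗ[R] R ⧸ I, Submodule.factor hIp ∘ₗ μ = l := by
  obtain ⟨n, K, e, hK⟩ := Module.FinitePresentation.exists_fin R L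
  obtain ⟨c, hc⟩ := Module.projective_lifting_property p.mkQ (l ∘ₗ e.symm.toLinearMap ∘ₗ K.mkQ)
    p.mkQ_surjective
  have hKp : K.map c ≤ p := by
    rintro _ ⟨k, hk, rfl⟩
    rw [← Submodule.Quotient.mk_eq_zero, ← p.mkQ_apply, ← LinearMap.comp_apply, hc]
    simp [(Submodule.Quotient.mk_eq_zero K).mpr hk]
  refine ⟨K.map c, hKp, hK.map c, K.mapQ _ c (Submodule.le_comap_map c K) ∘ₗ e.toLinearMap, ?_⟩
  suffices Submodule.factor hKp ∘ₗ K.mapQ _ c (Submodule.le_comap_map c K) =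
      l ∘ₗ e.symm.toLinearMap by
    rw [← LinearMap.comp_assoc, this, LinearMap.comp_assoc]
    simp
  refine Submodule.linearMap_qext K (LinearMap.ext fun v ↦ ?_)
  simpa using LinearMap.congr_fun hc v

end LinearMapsToQuotients

section Annihilators

variable {R S : Type*} [CommRing R] [CommRing S] [Algebra R S]
  {L : Type*} [AddCommGroup L] [Module R L]
  {M : Type*} [AddCommGroup M] [Module S M] [Module R M] [IsScalarTower R S M]

namespace LinearMap

theorem mem_ker_toSpanSingleton_iff_forall {f : L →ₗ[R] M} {s : S} :
    s ∈ ker (toSpanSingleton S (L →ₗ[R] M) f) ↔ ∀ x, s ∈ ker (toSpanSingleton S M (f x)) := by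
  simp only [mem_ker, toSpanSingleton_apply, LinearMap.ext_iff, smul_apply, zero_apply]

theorem ker_toSpanSingleton_le_apply (f : L →ₗ[R] M) (x : L) :
    ker (toSpanSingleton S (L →ₗ[R] M) f) ≤ ker (toSpanSingleton S M (f x)) :=
  fun _ hs ↦ mem_ker_toSpanSingleton_iff_forall.mp hs x

theorem iInf_ker_toSpanSingleton_le {ι : Type*} {v : ι → L}
    (hv : Submodule.span R (Set.range v) = ⊤) (f : L →ₗ[R] M) :
    ⨅ i, ker (toSpanSingleton S M (f (v i))) ≤ ker (toSpanSingleton S (L →ₗ[R] M) f) := by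
  intro s hs
  simp only [Submodule.mem_iInf, mem_ker, toSpanSingleton_apply] at hs
  rw [mem_ker, toSpanSingleton_apply]
  exact ext_on_range hv fun i ↦ by simpa using hs i

theorem ker_toSpanSingleton_le_smul (z : M) (r : R) :
    ker (toSpanSingleton S M z) ≤ ker (toSpanSingleton S M (r • z)) := by
  intro s hs
  rw [mem_ker, toSpanSingleton_apply] at hs ⊢
  rw [smul_comm, hs, smul_zero]

theorem mem_ker_toSpanSingleton_smul_iff {z : M} {r : R} {s : S} :
    s ∈ ker (toSpanSingleton S M (r • z)) ↔ s * algebraMap R S r ∈ ker (toSpanSingleton S M z) := by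
  simp only [mem_ker, toSpanSingleton_apply, mul_smul, algebraMap_smul]

end LinearMap

theorem Module.annihilator_le_comap_ker_toSpanSingleton (f : L →ₗ[R] M) :
    Module.annihilator R L ≤
      Ideal.comap (algebraMap R S) (LinearMap.ker (LinearMap.toSpanSingleton S (L →ₗ[R] M) f)) := by
  intro r hr
  rw [Ideal.mem_comap, LinearMap.mem_ker_toSpanSingleton_iff_forall]
  intro x
  rw [LinearMap.mem_ker, LinearMap.toSpanSingleton_apply, algebraMap_smul, ← map_smul,
    Module.mem_annihilator.mp hr x, map_zero]

end Annihilators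

namespace IsStrongKrullPrime

variable {R S : Type*} [CommRing R] [CommRing S] [Algebra R S]
  {L : Type*} [AddCommGroup L] [Module R L]
  {M : Type*} [AddCommGroup M] [Module S M] [Module R M] [IsScalarTower R S M]

theorem comap_mem_support_of_linearMap [Module.Finite R L] {Q : PrimeSpectrum S}
    (hQ : IsStrongKrullPrime S (L →ₗ[R] M) Q.asIdeal) :
    PrimeSpectrum.comap (algebraMap R S) Q ∈ Module.support R L := by
  obtain ⟨f, -, hf⟩ := hQ.2 ⊥ Submodule.fg_bot bot_le
  rw [Module.support_eq_zeroLocus, PrimeSpectrum.mem_zeroLocus]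
  exact (Module.annihilator_le_comap_ker_toSpanSingleton f).trans (Ideal.comap_mono hf)

theorem of_linearMap [Module.Finite R L] {Q : Ideal S}
    (hQ : IsStrongKrullPrime S (L →ₗ[R] M) Q) : IsStrongKrullPrime S M Q := by
  refine ⟨hQ.1, fun J hJ hJQ ↦ ?_⟩
  obtain ⟨f, hJf, hfQ⟩ := hQ.2 J hJ hJQ
  obtain ⟨n, v, hv⟩ := Module.Finite.exists_fin (R := R) (M := L)
  have hinf : (Finset.univ.inf fun i ↦ LinearMap.ker (LinearMap.toSpanSingleton S M (f (v i))))
      ≤ Q := by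
    simpa only [Finset.inf_univ_eq_iInf] using
      (LinearMap.iInf_ker_toSpanSingleton_le hv f).trans hfQ
  obtain ⟨i, -, hi⟩ := hQ.1.inf_le'.mp hinf
  exact ⟨f (v i), hJf.trans (LinearMap.ker_toSpanSingleton_le_apply f (v i)), hi⟩

theorem linearMap_of_mem_support [Module.FinitePresentation R L] {Q : PrimeSpectrum S}
    (hL : PrimeSpectrum.comap (algebraMap R S) Q ∈ Module.support R L)
    (hM : IsStrongKrullPrime S M Q.asIdeal) : IsStrongKrullPrime S (L →ₗ[R] M) Q.asIdeal := by
  refine ⟨hM.1, fun J hJ hJQ ↦ ?_⟩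
  obtain ⟨l, hl⟩ := Module.exists_linearMap_quotient_ne_zero_of_mem_support hL
  obtain ⟨x, hx⟩ : ∃ x, l x ≠ 0 := not_forall.mp fun h ↦ hl (LinearMap.ext h)
  obtain ⟨I, hIQ, hI, μ, rfl⟩ := Module.FinitePresentation.exists_fg_lift_quotient l
  obtain ⟨c, hc⟩ := I.mkQ_surjective (μ x)
  have hcQ : algebraMap R S c ∉ Q.asIdeal := by
    rwa [LinearMap.comp_apply, ← hc, Submodule.factor_mk, Submodule.mkQ_apply, ne_eq,
      Submodule.Quotient.mk_eq_zero, PrimeSpectrum.comap_asIdeal, Ideal.mem_comap] at hx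
  obtain ⟨z, hJz, hzQ⟩ := hM.2 (J ⊔ I.map (algebraMap R S)) (Submodule.FG.sup hJ (hI.map _))
    (sup_le hJQ (Ideal.map_le_iff_le_comap.mpr hIQ))
  have hIz : I ≤ LinearMap.ker (LinearMap.toSpanSingleton R M z) := fun r hr ↦ by
    have := hJz (Ideal.mem_sup_right (Ideal.mem_map_of_mem (algebraMap R S) hr))
    rw [LinearMap.mem_ker, LinearMap.toSpanSingleton_apply] at this ⊢
    rwa [algebraMap_smul] at this
  let f := I.liftQ (LinearMap.toSpanSingleton R M z) hIz ∘ₗ μ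
  have hf : ∀ y r, μ y = I.mkQ r → f y = r • z := fun y r hr ↦ by
    rw [LinearMap.comp_apply, hr, Submodule.mkQ_apply, Submodule.liftQ_apply,
      LinearMap.toSpanSingleton_apply]
  refine ⟨f, fun s hs ↦ ?_, fun s hs ↦ ?_⟩
  · refine LinearMap.mem_ker_toSpanSingleton_iff_forall.mpr fun y ↦ ?_
    obtain ⟨r, hr⟩ := I.mkQ_surjective (μ y)
    rw [hf y r hr.symm]
    exact LinearMap.ker_toSpanSingleton_le_smul z r (hJz (Ideal.mem_sup_left hs))
  · have hs' := LinearMap.ker_toSpanSingleton_le_apply f x hs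
    rw [hf x c hc.symm, LinearMap.mem_ker_toSpanSingleton_smul_iff] at hs'
    exact (Q.2.mem_or_mem (hzQ hs')).resolve_right hcQ

end IsStrongKrullPrime

theorem stmt_19 {R S : Type*} [CommRing R] [CommRing S] [Algebra R S]
    (L : Type*) [AddCommGroup L] [Module R L] [Module.FinitePresentation R L]
    (M : Type*) [AddCommGroup M] [Module S M] [Module R M] [IsScalarTower R S M]
    (Q : PrimeSpectrum S) :
    IsStrongKrullPrime S (L →ₗ[R] M) Q.asIdeal ↔
      PrimeSpectrum.comap (algebraMap R S) Q ∈ Module.support R L ∧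
        IsStrongKrullPrime S M Q.asIdeal :=
  ⟨fun h ↦ ⟨h.comap_mem_support_of_linearMap, h.of_linearMap⟩,
    fun ⟨hL, hM⟩ ↦ hM.linearMap_of_mem_support hL⟩
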